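/- arXiv:1105.2698 — 4 statements merged into one kernel-verified Lean document; each statement's English description precedes it below -/
import Mathlib

section
/- (Lemma A.3) (i) If condition (A.15) fails, then V_1 = 0 and V_4 = 0. (ii) If condition (A.16) fails, then V_2 = 0 and V_3 = 0. -/
open Real Finset

noncomputable section

/-- The trigonometric argument π/4 + (π/2)·t. -/
def trigArg (t : ℝ) : ℝ := Real.pi / 4 + Real.pi / 2 * t

/-- The dot product a'w = Σ_j a_j w_j as a real number. -/
def dotR {n : ℕ} (a w : Fin n → Fin 4) : ℝ :=
  ∑ j, ((a j : ℕ) : ℝ) * ((w j : ℕ) : ℝ)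

/-- ψ(a), depending on the pairwise disjoint subsets S₁, S₂, S₃. -/
def psi {n : ℕ} (S1 S2 S3 : Finset (Fin n)) (a : Fin n → Fin 4) : ℝ :=
  (∏ j ∈ S1, (Real.sin (trigArg ((a j : ℕ) : ℝ)) * Real.cos (trigArg ((a j : ℕ) : ℝ)))) *
  (∏ j ∈ S2, Real.cos (trigArg ((a j : ℕ) : ℝ))) *
  (∏ j ∈ S3, Real.sin (trigArg ((a j : ℕ) : ℝ)))

/-- S₁, S₂, S₃ are pairwise disjoint. -/
def PairwiseDisj {n : ℕ} (S1 S2 S3 : Finset (Fin n)) : Prop :=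
  Disjoint S1 S2 ∧ Disjoint S1 S3 ∧ Disjoint S2 S3

/-- a'g = Σ_j a_j g_j with g_j = u_j + v_j (ordinary integers), as a real number. -/
def dotG {n : ℕ} (u v a : Fin n → Fin 4) : ℝ :=
  ∑ j, ((a j : ℕ) : ℝ) * (((u j : ℕ) : ℝ) + ((v j : ℕ) : ℝ))

/-- a'h = Σ_j a_j h_j with h_j = u_j − v_j (ordinary integers), as a real number. -/
def dotH {n : ℕ} (u v a : Fin n → Fin 4) : ℝ :=
  ∑ j, ((a j : ℕ) : ℝ) * (((u j : ℕ) : ℝ) - ((v j : ℕ) : ℝ))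

/-- The coefficient 2^{(m+2)/2 − 2n}. -/
def coefPow (n m : ℕ) : ℝ := (2 : ℝ) ^ (((m + 2 : ℕ) : ℝ) / 2 - 2 * (n : ℝ))

def V1 {n : ℕ} (u v : Fin n → Fin 4) (S1 S2 S3 : Finset (Fin n)) : ℂ :=
  ∑ a : Fin n → Fin 4,
    ((coefPow n (2 * S1.card + S2.card + S3.card) : ℝ) : ℂ) * (1 / 4) *
      Complex.exp (Complex.I * ((Real.pi : ℂ) / 2) * (((1 + dotG u v a : ℝ)) : ℂ)) *
      ((psi S1 S2 S3 a : ℝ) : ℂ)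

def V2 {n : ℕ} (u v : Fin n → Fin 4) (S1 S2 S3 : Finset (Fin n)) : ℂ :=
  ∑ a : Fin n → Fin 4,
    ((coefPow n (2 * S1.card + S2.card + S3.card) : ℝ) : ℂ) * (1 / 4) *
      Complex.exp (Complex.I * ((Real.pi : ℂ) / 2) * ((dotH u v a : ℝ) : ℂ)) *
      ((psi S1 S2 S3 a : ℝ) : ℂ)

def V3 {n : ℕ} (u v : Fin n → Fin 4) (S1 S2 S3 : Finset (Fin n)) : ℂ :=
  ∑ a : Fin n → Fin 4,
    ((coefPow n (2 * S1.card + S2.card + S3.card) : ℝ) : ℂ) * (1 / 4) *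
      Complex.exp (-(Complex.I * ((Real.pi : ℂ) / 2) * ((dotH u v a : ℝ) : ℂ))) *
      ((psi S1 S2 S3 a : ℝ) : ℂ)

def V4 {n : ℕ} (u v : Fin n → Fin 4) (S1 S2 S3 : Finset (Fin n)) : ℂ :=
  ∑ a : Fin n → Fin 4,
    ((coefPow n (2 * S1.card + S2.card + S3.card) : ℝ) : ℂ) * (1 / 4) *
      Complex.exp (-(Complex.I * ((Real.pi : ℂ) / 2) * (((1 + dotG u v a : ℝ)) : ℂ))) *
      ((psi S1 S2 S3 a : ℝ) : ℂ)

/-- Δ_k^g = {j : g_j ≡ k (mod 4)} where g_j = u_j + v_j. -/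
def DeltaG {n : ℕ} (u v : Fin n → Fin 4) (k : ℕ) : Finset (Fin n) :=
  Finset.univ.filter (fun j => ((u j : ℕ) + (v j : ℕ)) % 4 = k)

/-- Δ_k^h = {j : h_j ≡ k (mod 4)} where h_j = u_j − v_j (an integer). -/
def DeltaH {n : ℕ} (u v : Fin n → Fin 4) (k : ℤ) : Finset (Fin n) :=
  Finset.univ.filter (fun j => (((u j : ℕ) : ℤ) - ((v j : ℕ) : ℤ)) % 4 = k)

/-- Condition (A.15): S₁ = Δ₂^g, S₂ ∪ S₃ = Δ₁^g ∪ Δ₃^g, S₄ = Δ₀^g. -/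
def CondA15 {n : ℕ} (u v : Fin n → Fin 4) (S1 S2 S3 : Finset (Fin n)) : Prop :=
  S1 = DeltaG u v 2 ∧ S2 ∪ S3 = DeltaG u v 1 ∪ DeltaG u v 3 ∧
    Finset.univ \ (S1 ∪ S2 ∪ S3) = DeltaG u v 0

/-- Condition (A.16): S₁ = Δ₂^h, S₂ ∪ S₃ = Δ₁^h ∪ Δ₃^h, S₄ = Δ₀^h. -/
def CondA16 {n : ℕ} (u v : Fin n → Fin 4) (S1 S2 S3 : Finset (Fin n)) : Prop :=
  S1 = DeltaH u v 2 ∧ S2 ∪ S3 = DeltaH u v 1 ∪ DeltaH u v 3 ∧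
    Finset.univ \ (S1 ∪ S2 ∪ S3) = DeltaH u v 0

/-- Δ_{ks} = {j : u_j = k, v_j = s}. -/
def DeltaKS {n : ℕ} (u v : Fin n → Fin 4) (k s : Fin 4) : Finset (Fin n) :=
  Finset.univ.filter (fun j => u j = k ∧ v j = s)

/-- f_{ks} = #Δ_{ks}. -/
def freq {n : ℕ} (u v : Fin n → Fin 4) (k s : Fin 4) : ℕ := (DeltaKS u v k s).card

def lam1 {n : ℕ} (u v : Fin n → Fin 4) : ℕ := freq u v 1 0 + freq u v 3 0
def lam2 {n : ℕ} (u v : Fin n → Fin 4) : ℕ := freq u v 0 1 + freq u v 0 3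
def lam3 {n : ℕ} (u v : Fin n → Fin 4) : ℕ := freq u v 1 2 + freq u v 3 2
def lam4 {n : ℕ} (u v : Fin n → Fin 4) : ℕ := freq u v 2 1 + freq u v 2 3
def lam5 {n : ℕ} (u v : Fin n → Fin 4) : ℕ := freq u v 1 1 + freq u v 3 3
def lam6 {n : ℕ} (u v : Fin n → Fin 4) : ℕ := freq u v 1 3 + freq u v 3 1

/-- β = λ₁ + λ₂ + λ₃ + λ₄. -/
def betaval {n : ℕ} (u v : Fin n → Fin 4) : ℕ :=
  lam1 u v + lam2 u v + lam3 u v + lam4 u v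

/-- Δ⁽¹⁾ = Δ₁₀ ∪ Δ₁₂ ∪ Δ₃₀ ∪ Δ₃₂. -/
def DeltaOne {n : ℕ} (u v : Fin n → Fin 4) : Finset (Fin n) :=
  DeltaKS u v 1 0 ∪ DeltaKS u v 1 2 ∪ DeltaKS u v 3 0 ∪ DeltaKS u v 3 2

/-- Δ⁽²⁾ = Δ₀₁ ∪ Δ₀₃ ∪ Δ₂₁ ∪ Δ₂₃. -/
def DeltaTwo {n : ℕ} (u v : Fin n → Fin 4) : Finset (Fin n) :=
  DeltaKS u v 0 1 ∪ DeltaKS u v 0 3 ∪ DeltaKS u v 2 1 ∪ DeltaKS u v 2 3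

/-- Condition (A.23): S₁ = Δ₀₂ ∪ Δ₂₀, S₂ ∪ S₃ = Δ, S₄ = Δ₀₀ ∪ Δ₂₂. -/
def CondA23 {n : ℕ} (u v : Fin n → Fin 4) (S1 S2 S3 : Finset (Fin n)) : Prop :=
  S1 = DeltaKS u v 0 2 ∪ DeltaKS u v 2 0 ∧
    S2 ∪ S3 = DeltaOne u v ∪ DeltaTwo u v ∧
    Finset.univ \ (S1 ∪ S2 ∪ S3) = DeltaKS u v 0 0 ∪ DeltaKS u v 2 2


/-!
The sum over `a ∈ ℤ₄ⁿ` factorizes over the coordinates. If the phase is `i ^ (c + a'd)` for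
integers `d_j` (`d = ±g` or `d = ±h`) and `ω = i ^ d_j`, coordinate `j` contributes
`∑_{t < 4} ω ^ t φ_j(t)`, where `φ_j` is its trigonometric factor in `ψ`. As
`sin (π/4 + πt/2) = √2/2 · (1, 1, -1, -1)` and `cos (π/4 + πt/2) = √2/2 · (1, -1, -1, 1)`, this is
`(1 - ω)(1 + ω²)/2`, `√2/2 · (1 - ω)(1 - ω²)`, `√2/2 · (1 + ω)(1 - ω²)` or `1 + ω + ω² + ω³`
according as `j` lies in `S₁`, `S₂`, `S₃` or `S₄`. So it vanishes unless `d_j ≡ 2 (mod 4)`,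
`d_j` is odd, `d_j` is odd, resp. `d_j ≡ 0 (mod 4)`; a failure of (A.15) or (A.16) yields a
coordinate breaking this rule for `d = g`, resp. `d = h`, and then also for `-g`, `-h`.
-/

open Complex (I)

section Trigonometry

lemma sin_trigArg_fin (t : Fin 4) : sin (trigArg t) = √2 / 2 * ![1, 1, -1, -1] t := by
  fin_cases t <;> simp [trigArg, sin_add, cos_add, show π / 2 * 3 = π / 2 + π by ring]

lemma cos_trigArg_fin (t : Fin 4) : cos (trigArg t) = √2 / 2 * ![1, -1, -1, 1] t := by
  fin_cases t <;> simp [trigArg, sin_add, cos_add, show π / 2 * 3 = π / 2 + π by ring]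

lemma sin_trigArg_mul_cos_trigArg (t : ℕ) : sin (trigArg t) * cos (trigArg t) = (-1) ^ t / 2 := by
  rw [eq_div_iff two_ne_zero, mul_comm, ← mul_assoc, ← sin_two_mul, trigArg,
    show 2 * (π / 4 + π / 2 * t) = t * π + π / 2 by ring, sin_add_pi_div_two, cos_nat_mul_pi]

variable (ω : ℂ)

lemma sum_pow_mul_sin_trigArg_mul_cos_trigArg :
    ∑ t : Fin 4, ω ^ (t : ℕ) * ((sin (trigArg t) * cos (trigArg t) : ℝ) : ℂ) =
      (1 - ω) * (1 + ω ^ 2) / 2 := by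
  simp only [Fin.sum_univ_four, sin_trigArg_mul_cos_trigArg, Fin.coe_ofNat_eq_mod, Nat.reduceMod]
  push_cast
  ring

lemma sum_pow_mul_cos_trigArg :
    ∑ t : Fin 4, ω ^ (t : ℕ) * (cos (trigArg t) : ℂ) = √2 / 2 * ((1 - ω) * (1 - ω ^ 2)) := by
  simp only [Fin.sum_univ_four, cos_trigArg_fin, Fin.coe_ofNat_eq_mod, Nat.reduceMod,
    Matrix.cons_val]
  push_cast
  ring

lemma sum_pow_mul_sin_trigArg :
    ∑ t : Fin 4, ω ^ (t : ℕ) * (sin (trigArg t) : ℂ) = √2 / 2 * ((1 + ω) * (1 - ω ^ 2)) := by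
  simp only [Fin.sum_univ_four, sin_trigArg_fin, Fin.coe_ofNat_eq_mod, Nat.reduceMod,
    Matrix.cons_val]
  push_cast
  ring

end Trigonometry

section FourthRoots

variable {d : ℤ}

lemma I_zpow_sq : (I ^ d) ^ 2 = (-1) ^ d := by
  rw [← zpow_natCast, ← zpow_mul, mul_comm, zpow_mul, Nat.cast_ofNat, zpow_two, Complex.I_mul_I]

lemma I_zpow_pow_four : (I ^ d) ^ 4 = 1 := by
  rw [← zpow_natCast, ← zpow_mul, mul_comm, zpow_mul, zpow_natCast, Complex.I_pow_four, one_zpow]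

lemma I_zpow_eq_one_iff : I ^ d = 1 ↔ d % 4 = 0 := by
  rw [Complex.isPrimitiveRoot_I.zpow_eq_one_iff_dvd]
  omega

lemma one_sub_I_zpow_mul_one_add_sq_eq_zero (h : d % 4 ≠ 2) :
    (1 - I ^ d) * (1 + (I ^ d) ^ 2) = 0 := by
  by_cases h4 : d % 4 = 0
  · rw [I_zpow_eq_one_iff.2 h4, sub_self, zero_mul]
  · rw [I_zpow_sq, Odd.neg_one_zpow (by rw [Int.odd_iff]; omega), add_neg_cancel, mul_zero]

lemma one_sub_sq_I_zpow_eq_zero (h : d % 2 = 0) : 1 - (I ^ d) ^ 2 = 0 := by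
  rw [I_zpow_sq, Even.neg_one_zpow (Int.even_iff.2 h), sub_self]

lemma sum_pow_I_zpow_eq_zero (h : d % 4 ≠ 0) : ∑ t : Fin 4, (I ^ d) ^ (t : ℕ) = 0 := by
  have hne : I ^ d - 1 ≠ 0 := sub_ne_zero.2 (mt I_zpow_eq_one_iff.1 h)
  apply (mul_eq_zero.1 _).resolve_right hne
  rw [Fin.sum_univ_eq_sum_range (fun t => (I ^ d) ^ t), geom_sum_mul, I_zpow_pow_four, sub_self]

end FourthRoots

section Coordinates

variable {n : ℕ} (S1 S2 S3 : Finset (Fin n))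

def coordWeight (j : Fin n) (t : Fin 4) : ℝ :=
  (if j ∈ S1 then sin (trigArg t) * cos (trigArg t) else 1) *
    (if j ∈ S2 then cos (trigArg t) else 1) * (if j ∈ S3 then sin (trigArg t) else 1)

lemma prod_coordWeight (a : Fin n → Fin 4) :
    ∏ j, coordWeight S1 S2 S3 j (a j) = psi S1 S2 S3 a := by
  simp only [coordWeight, prod_mul_distrib, Fintype.prod_ite_mem, psi]

def CoordCompatible (j : Fin n) (d : ℤ) : Prop :=
  (j ∈ S1 → d % 4 = 2) ∧ (j ∈ S2 ∪ S3 → d % 2 = 1) ∧ (j ∉ S1 ∪ S2 ∪ S3 → d % 4 = 0)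

variable {S1 S2 S3}

lemma coordCompatible_neg {j : Fin n} {d : ℤ} :
    CoordCompatible S1 S2 S3 j (-d) ↔ CoordCompatible S1 S2 S3 j d := by
  simp only [CoordCompatible, show -d % 4 = 2 ↔ d % 4 = 2 by omega,
    show -d % 2 = 1 ↔ d % 2 = 1 by omega, show -d % 4 = 0 ↔ d % 4 = 0 by omega]

lemma sum_pow_I_zpow_mul_coordWeight_eq_zero (hd : PairwiseDisj S1 S2 S3) {j : Fin n} {d : ℤ}
    (h : ¬ CoordCompatible S1 S2 S3 j d) :
    ∑ t : Fin 4, (I ^ d) ^ (t : ℕ) * (coordWeight S1 S2 S3 j t : ℂ) = 0 := by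
  obtain ⟨h12, h13, h23⟩ := hd
  simp only [CoordCompatible, not_and_or, Classical.not_imp] at h
  rcases h with ⟨hj1, hmod⟩ | ⟨hj23, hmod⟩ | ⟨hj, hmod⟩
  · simp only [coordWeight, if_pos hj1, if_neg (disjoint_left.1 h12 hj1),
      if_neg (disjoint_left.1 h13 hj1), mul_one]
    rw [sum_pow_mul_sin_trigArg_mul_cos_trigArg,
      one_sub_I_zpow_mul_one_add_sq_eq_zero (by omega), zero_div]
  · rcases mem_union.1 hj23 with hj2 | hj3
    · simp only [coordWeight, if_neg (disjoint_right.1 h12 hj2), if_pos hj2,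
        if_neg (disjoint_left.1 h23 hj2), one_mul, mul_one]
      rw [sum_pow_mul_cos_trigArg, one_sub_sq_I_zpow_eq_zero (by omega), mul_zero, mul_zero]
    · simp only [coordWeight, if_neg (disjoint_right.1 h13 hj3), if_neg (disjoint_right.1 h23 hj3),
        if_pos hj3, one_mul]
      rw [sum_pow_mul_sin_trigArg, one_sub_sq_I_zpow_eq_zero (by omega), mul_zero, mul_zero]
  · simp only [mem_union, not_or] at hj
    simp only [coordWeight, if_neg hj.1.1, if_neg hj.1.2, if_neg hj.2, mul_one,
      Complex.ofReal_one]
    exact sum_pow_I_zpow_eq_zero hmod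

end Coordinates

section Sums

variable {n : ℕ} {S1 S2 S3 : Finset (Fin n)}

lemma cexp_I_mul_pi_div_two_mul_intCast (k : ℤ) : Complex.exp (I * (π / 2) * k) = I ^ k := by
  rw [show I * (π / 2) * k = k * (π / 2 * I) by ring, Complex.exp_int_mul,
    Complex.exp_pi_div_two_mul_I]

lemma I_zpow_add_sum (c : ℤ) (d : Fin n → ℤ) (a : Fin n → Fin 4) :
    I ^ (c + ∑ j, (a j : ℕ) * d j) = I ^ c * ∏ j, (I ^ d j) ^ (a j : ℕ) := by
  simp only [← cexp_I_mul_pi_div_two_mul_intCast, ← Complex.exp_nat_mul, ← Complex.exp_add,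
    ← Complex.exp_sum]
  push_cast
  rw [mul_add, mul_sum]
  congr 2
  exact sum_congr rfl fun j _ => by ring

lemma sum_prod_pow_mul_psi (ω : Fin n → ℂ) :
    ∑ a : Fin n → Fin 4, (∏ j, ω j ^ (a j : ℕ)) * (psi S1 S2 S3 a : ℂ) =
      ∏ j, ∑ t : Fin 4, ω j ^ (t : ℕ) * (coordWeight S1 S2 S3 j t : ℂ) := by
  rw [Fintype.prod_sum]
  refine sum_congr rfl fun a _ => ?_
  rw [← prod_coordWeight, Complex.ofReal_prod, prod_mul_distrib]

lemma sum_mul_cexp_mul_psi_eq_zero (hd : PairwiseDisj S1 S2 S3) (K : ℂ) (c : ℤ) (d : Fin n → ℤ)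
    {j₀ : Fin n} (hj₀ : ¬ CoordCompatible S1 S2 S3 j₀ (d j₀)) (x : (Fin n → Fin 4) → ℂ)
    (hx : ∀ a, x a = I * (π / 2) * ((c + ∑ j, (a j : ℕ) * d j : ℤ) : ℂ)) :
    ∑ a, K * Complex.exp (x a) * (psi S1 S2 S3 a : ℂ) = 0 := by
  calc ∑ a, K * Complex.exp (x a) * (psi S1 S2 S3 a : ℂ)
      = K * I ^ c * ∑ a : Fin n → Fin 4, (∏ j, (I ^ d j) ^ (a j : ℕ)) * (psi S1 S2 S3 a : ℂ) := by
        rw [mul_sum]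
        refine sum_congr rfl fun a _ => ?_
        rw [hx, cexp_I_mul_pi_div_two_mul_intCast, I_zpow_add_sum]
        ring
    _ = 0 := by
      rw [sum_prod_pow_mul_psi,
        prod_eq_zero (mem_univ j₀) (sum_pow_I_zpow_mul_coordWeight_eq_zero hd hj₀), mul_zero]

end Sums

section Conditions

variable {n : ℕ} {S1 S2 S3 : Finset (Fin n)}

lemma eq_filter_of_forall_coordCompatible {d : Fin n → ℤ}
    (h : ∀ j, CoordCompatible S1 S2 S3 j (d j)) :
    S1 = univ.filter (d · % 4 = 2) ∧
      S2 ∪ S3 = univ.filter (d · % 4 = 1) ∪ univ.filter (d · % 4 = 3) ∧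
      univ \ (S1 ∪ S2 ∪ S3) = univ.filter (d · % 4 = 0) := by
  refine ⟨?_, ?_, ?_⟩ <;> ext j <;> obtain ⟨h1, h23, h0⟩ := h j <;>
    by_cases j ∈ S1 <;> by_cases j ∈ S2 <;> by_cases j ∈ S3 <;> simp_all <;> omega

lemma condA15_of_forall_coordCompatible (u v : Fin n → Fin 4)
    (h : ∀ j, CoordCompatible S1 S2 S3 j ((u j : ℕ) + (v j : ℕ))) : CondA15 u v S1 S2 S3 := by
  have hΔ (k : ℕ) :
      DeltaG u v k = univ.filter (fun j => (((u j : ℕ) : ℤ) + (v j : ℕ)) % 4 = (k : ℤ)) := by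
    ext j
    simp only [DeltaG, mem_filter, mem_univ, true_and]
    omega
  simpa only [CondA15, hΔ, Nat.cast_ofNat, Nat.cast_one, Nat.cast_zero] using
    eq_filter_of_forall_coordCompatible h

lemma condA16_of_forall_coordCompatible (u v : Fin n → Fin 4)
    (h : ∀ j, CoordCompatible S1 S2 S3 j ((u j : ℕ) - (v j : ℕ))) : CondA16 u v S1 S2 S3 :=
  eq_filter_of_forall_coordCompatible h

end Conditions

theorem lemmaA3_general (n : ℕ) (u v : Fin n → Fin 4)
    (S1 S2 S3 : Finset (Fin n)) (hd : PairwiseDisj S1 S2 S3) :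
    (¬ CondA15 u v S1 S2 S3 →
      V1 u v S1 S2 S3 = 0 ∧ V4 u v S1 S2 S3 = 0) ∧
    (¬ CondA16 u v S1 S2 S3 →
      V2 u v S1 S2 S3 = 0 ∧ V3 u v S1 S2 S3 = 0) := by
  refine ⟨fun h15 => ?_, fun h16 => ?_⟩
  · obtain ⟨j, hj⟩ := not_forall.1 (mt (condA15_of_forall_coordCompatible u v) h15)
    exact ⟨sum_mul_cexp_mul_psi_eq_zero hd _ 1 (fun j => (u j : ℕ) + (v j : ℕ)) hj _
        fun a => by push_cast [dotG]; ring,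
      sum_mul_cexp_mul_psi_eq_zero hd _ (-1) (fun j => -((u j : ℕ) + (v j : ℕ)))
        (coordCompatible_neg.not.2 hj) _
        fun a => by push_cast [dotG, mul_neg, sum_neg_distrib]; ring⟩
  · obtain ⟨j, hj⟩ := not_forall.1 (mt (condA16_of_forall_coordCompatible u v) h16)
    exact ⟨sum_mul_cexp_mul_psi_eq_zero hd _ 0 (fun j => (u j : ℕ) - (v j : ℕ)) hj _
        fun a => by push_cast [dotH]; ring,
      sum_mul_cexp_mul_psi_eq_zero hd _ 0 (fun j => -((u j : ℕ) - (v j : ℕ)))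
        (coordCompatible_neg.not.2 hj) _
        fun a => by push_cast [dotH, mul_neg, sum_neg_distrib]; ring⟩

/-- Lemma A.3: (i) if (A.15) fails then V₁ = V₄ = 0; (ii) if (A.16) fails then
V₂ = V₃ = 0. -/
theorem lemmaA3 (n : ℕ) (hn : 1 ≤ n) (u v : Fin n → Fin 4)
    (S1 S2 S3 : Finset (Fin n)) (hd : PairwiseDisj S1 S2 S3) :
    (¬ CondA15 u v S1 S2 S3 →
      V1 u v S1 S2 S3 = 0 ∧ V4 u v S1 S2 S3 = 0) ∧
    (¬ CondA16 u v S1 S2 S3 →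
      V2 u v S1 S2 S3 = 0 ∧ V3 u v S1 S2 S3 = 0) :=
  lemmaA3_general n u v S1 S2 S3 hd
end
end

section
/- (Lemma A.4(i)) If condition (A.15) holds, then V_1 + V_4 = ((−1)^{n(g,1)} / (2^{β/2 + 1} · i^{n_3})) · [exp((iπ/4)(2 + f_3^g − f_1^g)) + (−1)^{n_3} · exp(−(iπ/4)(2 + f_3^g − f_1^g))]. -/
open Real Finset

noncomputable section

/-! ### Auxiliary lemmas for Lemma A.4(i) -/

def zeta : ℂ := Complex.exp (Complex.I * ((Real.pi : ℂ) / 4))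

lemma zeta_ne : zeta ≠ 0 := Complex.exp_ne_zero _

lemma exp_I_half : Complex.exp (Complex.I * ((Real.pi : ℂ) / 2)) = Complex.I := by
  have h : Complex.I * ((Real.pi : ℂ) / 2) = ((Real.pi / 2 : ℝ) : ℂ) * Complex.I := by
    push_cast; ring
  rw [h, Complex.exp_mul_I, ← Complex.ofReal_cos, ← Complex.ofReal_sin,
    Real.cos_pi_div_two, Real.sin_pi_div_two]
  simp

lemma zeta_sq : zeta ^ 2 = Complex.I := by
  rw [zeta, ← Complex.exp_nat_mul]
  rw [show ((2:ℕ):ℂ) * (Complex.I * ((Real.pi : ℂ) / 4)) = Complex.I * ((Real.pi : ℂ) / 2) by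
    push_cast; ring]
  exact exp_I_half

lemma zeta_pow8 : zeta ^ 8 = 1 := by
  have h : zeta ^ 8 = (zeta ^ 2) ^ 4 := by ring
  rw [h, zeta_sq]
  simp [pow_succ, Complex.I_mul_I]

lemma exp_I_pi4_int (k : ℤ) :
    Complex.exp (Complex.I * ((Real.pi : ℂ) / 4) * k) = zeta ^ k := by
  rw [show Complex.I * ((Real.pi : ℂ) / 4) * k = k * (Complex.I * ((Real.pi : ℂ) / 4)) by ring,
    Complex.exp_int_mul]
  rfl

lemma zeta_val : zeta = ((Real.sqrt 2 / 2 : ℝ) : ℂ) * (1 + Complex.I) := by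
  rw [zeta, show Complex.I * ((Real.pi : ℂ) / 4) = ((Real.pi / 4 : ℝ) : ℂ) * Complex.I by
      push_cast; ring,
    Complex.exp_mul_I, ← Complex.ofReal_cos, ← Complex.ofReal_sin,
    Real.cos_pi_div_four, Real.sin_pi_div_four]
  ring

lemma expI2_nat (N : ℕ) :
    Complex.exp (Complex.I * ((Real.pi : ℂ) / 2) * N) = Complex.I ^ N := by
  rw [show Complex.I * ((Real.pi : ℂ) / 2) * N = N * (Complex.I * ((Real.pi : ℂ) / 2)) by ring,
    Complex.exp_nat_mul, exp_I_half]

lemma I_pow_mod (N : ℕ) : Complex.I ^ N = Complex.I ^ (N % 4) := by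
  conv_lhs => rw [← Nat.div_add_mod N 4]
  rw [pow_add, pow_mul]
  norm_num [Complex.I_pow_four]

lemma I_pow_mul_mod (k N : ℕ) : Complex.I ^ (k * N) = (Complex.I ^ (N % 4)) ^ k := by
  rw [mul_comm, pow_mul, ← I_pow_mod]

lemma ta0 : trigArg 0 = π/4 := by unfold trigArg; ring
lemma ta1 : trigArg 1 = π/4 + π/2 := by unfold trigArg; ring
lemma ta2 : trigArg 2 = π/4 + π := by unfold trigArg; ring
lemma ta3 : trigArg 3 = (π/4 + π) + π/2 := by unfold trigArg; ring

lemma sv0 : Real.sin (trigArg 0) = Real.sqrt 2 / 2 := by rw [ta0, Real.sin_pi_div_four]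
lemma sv1 : Real.sin (trigArg 1) = Real.sqrt 2 / 2 := by
  rw [ta1, Real.sin_add_pi_div_two, Real.cos_pi_div_four]
lemma sv2 : Real.sin (trigArg 2) = -(Real.sqrt 2 / 2) := by
  rw [ta2, Real.sin_add_pi, Real.sin_pi_div_four]
lemma sv3 : Real.sin (trigArg 3) = -(Real.sqrt 2 / 2) := by
  rw [ta3, Real.sin_add_pi_div_two, Real.cos_add_pi, Real.cos_pi_div_four]
lemma cv0 : Real.cos (trigArg 0) = Real.sqrt 2 / 2 := by rw [ta0, Real.cos_pi_div_four]
lemma cv1 : Real.cos (trigArg 1) = -(Real.sqrt 2 / 2) := by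
  rw [ta1, Real.cos_add_pi_div_two, Real.sin_pi_div_four]
lemma cv2 : Real.cos (trigArg 2) = -(Real.sqrt 2 / 2) := by
  rw [ta2, Real.cos_add_pi, Real.cos_pi_div_four]
lemma cv3 : Real.cos (trigArg 3) = Real.sqrt 2 / 2 := by
  rw [ta3, Real.cos_add_pi_div_two, Real.sin_add_pi, Real.sin_pi_div_four]; ring

lemma gv0 : ((0:Fin 4):ℕ) = 0 := rfl
lemma gv1 : ((1:Fin 4):ℕ) = 1 := rfl
lemma gv2 : ((2:Fin 4):ℕ) = 2 := rfl
lemma gv3 : ((3:Fin 4):ℕ) = 3 := rfl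

lemma sqrt2_sq : Real.sqrt 2 * Real.sqrt 2 = 2 := Real.mul_self_sqrt (by norm_num)
lemma sqrt2_sq' : (((Real.sqrt 2 : ℝ)):ℂ)^2 = 2 := by
  rw [sq, ← Complex.ofReal_mul, sqrt2_sq]; norm_num

lemma zeta_zpm1 : zeta ^ (-1:ℤ) = ((Real.sqrt 2 / 2 : ℝ) : ℂ) * (1 - Complex.I) := by
  have h : zeta * (((Real.sqrt 2 / 2 : ℝ) : ℂ) * (1 - Complex.I)) = 1 := by
    rw [zeta_val]
    simp only [Complex.ofReal_div]
    ring_nf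
    rw [Complex.I_sq, sqrt2_sq']
    norm_num
  rw [zpow_neg_one, inv_eq_of_mul_eq_one_right h]

lemma sum_l1 : ∑ x : Fin 4, ((-1:ℂ))^(x:ℕ) *
    ((Real.sin (trigArg ((x:ℕ):ℝ)) * Real.cos (trigArg ((x:ℕ):ℝ)) : ℝ) : ℂ) = 2 := by
  rw [Fin.sum_univ_four, gv0, gv1, gv2, gv3]
  simp only [Nat.cast_zero, Nat.cast_one, Nat.cast_ofNat]
  rw [sv0, sv1, sv2, sv3, cv0, cv1, cv2, cv3]
  push_cast
  ring_nf
  rw [sqrt2_sq']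

lemma sum_l2 : ∑ x : Fin 4, (Complex.I)^(x:ℕ) *
    ((Real.cos (trigArg ((x:ℕ):ℝ)) : ℝ) : ℂ) = 2 * zeta ^ (-1:ℤ) := by
  rw [zeta_zpm1, Fin.sum_univ_four, gv0, gv1, gv2, gv3]
  simp only [Nat.cast_zero, Nat.cast_one, Nat.cast_ofNat]
  rw [cv0, cv1, cv2, cv3]
  push_cast
  ring_nf
  rw [show (Complex.I)^3 = -Complex.I by rw [pow_succ, Complex.I_sq]; ring, Complex.I_sq]
  ring

lemma sum_l3 : ∑ x : Fin 4, (-Complex.I)^(x:ℕ) *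
    ((Real.cos (trigArg ((x:ℕ):ℝ)) : ℝ) : ℂ) = 2 * zeta ^ (1:ℤ) := by
  rw [zpow_one, zeta_val, Fin.sum_univ_four, gv0, gv1, gv2, gv3]
  simp only [Nat.cast_zero, Nat.cast_one, Nat.cast_ofNat]
  rw [cv0, cv1, cv2, cv3]
  push_cast
  ring_nf
  rw [show (Complex.I)^3 = -Complex.I by rw [pow_succ, Complex.I_sq]; ring, Complex.I_sq]
  ring

lemma sum_l4 : ∑ x : Fin 4, (Complex.I)^(x:ℕ) *
    ((Real.sin (trigArg ((x:ℕ):ℝ)) : ℝ) : ℂ) = 2 * zeta ^ (1:ℤ) := by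
  rw [zpow_one, zeta_val, Fin.sum_univ_four, gv0, gv1, gv2, gv3]
  simp only [Nat.cast_zero, Nat.cast_one, Nat.cast_ofNat]
  rw [sv0, sv1, sv2, sv3]
  push_cast
  ring_nf
  rw [show (Complex.I)^3 = -Complex.I by rw [pow_succ, Complex.I_sq]; ring, Complex.I_sq]
  ring

lemma sum_l5 : ∑ x : Fin 4, (-Complex.I)^(x:ℕ) *
    ((Real.sin (trigArg ((x:ℕ):ℝ)) : ℝ) : ℂ) = 2 * zeta ^ (-1:ℤ) := by
  rw [zeta_zpm1, Fin.sum_univ_four, gv0, gv1, gv2, gv3]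
  simp only [Nat.cast_zero, Nat.cast_one, Nat.cast_ofNat]
  rw [sv0, sv1, sv2, sv3]
  push_cast
  ring_nf
  rw [show (Complex.I)^3 = -Complex.I by rw [pow_succ, Complex.I_sq]; ring, Complex.I_sq]
  ring

lemma prod_zpow_sum {ι : Type*} (s : Finset ι) (w : ℂ) (hw : w ≠ 0) (f : ι → ℤ) :
    ∏ j ∈ s, w ^ (f j) = w ^ (∑ j ∈ s, f j) := by
  induction s using Finset.cons_induction with
  | empty => simp
  | cons a s ha ih => rw [Finset.prod_cons, Finset.sum_cons, zpow_add₀ hw, ih]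

/-- Lemma A.4(i): if (A.15) holds then
V₁ + V₄ = ((−1)^{n(g,1)} / (2^{β/2+1} i^{n₃}))
  [exp((iπ/4)(2 + f₃^g − f₁^g)) + (−1)^{n₃} exp(−(iπ/4)(2 + f₃^g − f₁^g))]. -/

theorem lemmaA4_i (n : ℕ) (hn : 1 ≤ n) (u v : Fin n → Fin 4)
    (S1 S2 S3 : Finset (Fin n)) (hd : PairwiseDisj S1 S2 S3)
    (h15 : CondA15 u v S1 S2 S3) :
    V1 u v S1 S2 S3 + V4 u v S1 S2 S3 =
      ((-1 : ℂ) ^ (S3 ∩ DeltaG u v 1).card /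
          ((((2 : ℝ) ^ ((betaval u v : ℝ) / 2 + 1) : ℝ) : ℂ) *
            Complex.I ^ S3.card)) *
        (Complex.exp (Complex.I * ((Real.pi : ℂ) / 4) *
            (((2 + ((DeltaG u v 3).card : ℤ) - ((DeltaG u v 1).card : ℤ) : ℤ) : ℂ))) +
          (-1 : ℂ) ^ S3.card *
            Complex.exp (-(Complex.I * ((Real.pi : ℂ) / 4) *
              (((2 + ((DeltaG u v 3).card : ℤ) - ((DeltaG u v 1).card : ℤ) : ℤ) : ℂ))))) := by
  classical
  obtain ⟨d12, d13, d23⟩ := hd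
  obtain ⟨h1, h2, h3⟩ := h15
  set G : Fin n → ℕ := fun j => (u j : ℕ) + (v j : ℕ) with hG
  -- membership facts from (A.15)
  have hm1 : ∀ j ∈ S1, G j % 4 = 2 := by
    intro j hj; rw [h1] at hj; simpa [DeltaG, hG] using hj
  have hm23 : ∀ j, j ∈ S2 ∪ S3 → G j % 4 = 1 ∨ G j % 4 = 3 := by
    intro j hj; rw [h2] at hj
    simpa [DeltaG, hG, Finset.mem_union] using hj
  have hm0 : ∀ j, j ∉ S1 → j ∉ S2 → j ∉ S3 → G j % 4 = 0 := by
    intro j hj1 hj2 hj3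
    have hj : j ∈ Finset.univ \ (S1 ∪ S2 ∪ S3) := by simp [hj1, hj2, hj3]
    rw [h3] at hj; simpa [DeltaG, hG] using hj
  have hns21 : ∀ j ∈ S2, j ∉ S1 := fun j hj => Finset.disjoint_right.mp d12 hj
  have hns31 : ∀ j ∈ S3, j ∉ S1 := fun j hj => Finset.disjoint_right.mp d13 hj
  have hns32 : ∀ j ∈ S3, j ∉ S2 := fun j hj => Finset.disjoint_right.mp d23 hj
  set U : Finset (Fin n) := S1 ∪ S2 ∪ S3 with hU
  set φ : Fin n → Fin 4 → ℂ := fun j x =>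
    if j ∈ S1 then
      ((Real.sin (trigArg ((x:ℕ):ℝ)) * Real.cos (trigArg ((x:ℕ):ℝ)) : ℝ) : ℂ)
    else if j ∈ S2 then ((Real.cos (trigArg ((x:ℕ):ℝ)) : ℝ) : ℂ)
    else if j ∈ S3 then ((Real.sin (trigArg ((x:ℕ):ℝ)) : ℝ) : ℂ)
    else 1 with hφ
  set e : Fin n → ℤ := fun j =>
    if j ∈ S2 then (if G j % 4 = 1 then -1 else 1)
    else if j ∈ S3 then (if G j % 4 = 1 then 1 else -1) else 0 with he
  set c : Fin n → ℂ := fun j => if j ∈ U then 2 else 4 with hc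
  -- ψ as a product over all indices
  have hpsiC : ∀ a : Fin n → Fin 4, ((psi S1 S2 S3 a : ℝ) : ℂ) = ∏ j, φ j (a j) := by
    intro a
    have hUprod : ∏ j ∈ U, φ j (a j) = ∏ j, φ j (a j) := by
      apply Finset.prod_subset (Finset.subset_univ _)
      intro j _ hj
      simp only [hU, Finset.mem_union, not_or] at hj
      simp [hφ, hj.1.1, hj.1.2, hj.2]
    have p1 : ∏ j ∈ S1, φ j (a j)
        = ∏ j ∈ S1, ((Real.sin (trigArg ((a j : ℕ):ℝ)) * Real.cos (trigArg ((a j : ℕ):ℝ)) : ℝ) : ℂ) :=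
      Finset.prod_congr rfl fun j hj => by simp [hφ, hj]
    have p2 : ∏ j ∈ S2, φ j (a j)
        = ∏ j ∈ S2, ((Real.cos (trigArg ((a j : ℕ):ℝ)) : ℝ) : ℂ) :=
      Finset.prod_congr rfl fun j hj => by simp [hφ, hj, hns21 j hj]
    have p3 : ∏ j ∈ S3, φ j (a j)
        = ∏ j ∈ S3, ((Real.sin (trigArg ((a j : ℕ):ℝ)) : ℝ) : ℂ) :=
      Finset.prod_congr rfl fun j hj => by simp [hφ, hj, hns31 j hj, hns32 j hj]
    rw [psi, ← hUprod, hU, Finset.union_assoc,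
      Finset.prod_union (by rw [Finset.disjoint_union_right]; exact ⟨d12, d13⟩),
      Finset.prod_union d23, p1, p2, p3]
    push_cast
    ring
  -- the exponential factor as a product
  have hexp1 : ∀ a : Fin n → Fin 4,
      Complex.exp (Complex.I * ((Real.pi : ℂ) / 2) * (((1 + dotG u v a : ℝ)) : ℂ))
        = Complex.I * ∏ j, (Complex.I ^ (G j % 4)) ^ ((a j : ℕ)) := by
    intro a
    have hcast : (((1 + dotG u v a : ℝ)) : ℂ) = 1 + ∑ j, ((((a j : ℕ) * G j : ℕ)) : ℂ) := by
      rw [dotG]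
      simp only [hG]
      push_cast
      try ring
      try (congr 1; exact Finset.sum_congr rfl fun j _ => by push_cast; ring)
    have harg : Complex.I * ((Real.pi : ℂ) / 2) * (((1 + dotG u v a : ℝ)) : ℂ)
        = Complex.I * ((Real.pi : ℂ) / 2)
          + ∑ j, Complex.I * ((Real.pi : ℂ) / 2) * ((((a j : ℕ) * G j : ℕ)) : ℂ) := by
      rw [hcast, mul_add, mul_one, Finset.mul_sum]
    rw [harg, Complex.exp_add, exp_I_half, Complex.exp_sum]
    congr 1
    exact Finset.prod_congr rfl fun j _ => by rw [expI2_nat, I_pow_mul_mod]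
  have hexp4 : ∀ a : Fin n → Fin 4,
      Complex.exp (-(Complex.I * ((Real.pi : ℂ) / 2) * (((1 + dotG u v a : ℝ)) : ℂ)))
        = (-Complex.I) * ∏ j, ((-Complex.I) ^ (G j % 4)) ^ ((a j : ℕ)) := by
    intro a
    rw [Complex.exp_neg, hexp1 a, mul_inv, Complex.inv_I, ← Finset.prod_inv_distrib]
    congr 1
    exact Finset.prod_congr rfl fun j _ => by rw [← inv_pow, ← inv_pow, Complex.inv_I]
  set C0 : ℂ := ((coefPow n (2 * S1.card + S2.card + S3.card) : ℝ) : ℂ) * (1 / 4) with hC0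
  have hI3 : (Complex.I) ^ 3 = -Complex.I := by rw [pow_succ, Complex.I_sq]; ring
  have hmI3 : (-Complex.I) ^ 3 = Complex.I := by
    rw [show (-Complex.I) ^ 3 = -(Complex.I ^ 3) by ring, hI3]; ring
  -- evaluation of the local sums, V1 version
  have hfac1 : ∀ j, (∑ x : Fin 4, (Complex.I ^ (G j % 4)) ^ ((x : ℕ)) * φ j x)
      = c j * zeta ^ (e j) := by
    intro j
    by_cases hj1 : j ∈ S1
    · have hj2 : j ∉ S2 := Finset.disjoint_left.mp d12 hj1
      have hj3 : j ∉ S3 := Finset.disjoint_left.mp d13 hj1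
      have hcj : c j = 2 := by simp [hc, hU, hj1]
      have hej : e j = 0 := by simp [he, hj2, hj3]
      simp only [hφ, if_pos hj1]
      rw [hm1 j hj1, Complex.I_sq, hcj, hej]
      simpa using sum_l1
    · by_cases hj2 : j ∈ S2
      · have hcj : c j = 2 := by simp [hc, hU, hj2]
        rcases hm23 j (by simp [hj2]) with hg | hg
        · have hej : e j = -1 := by simp [he, hj2, hg]
          simp only [hφ, if_neg hj1, if_pos hj2]
          rw [hg, pow_one, hcj, hej]
          exact sum_l2
        · have hej : e j = 1 := by simp [he, hj2, hg]
          simp only [hφ, if_neg hj1, if_pos hj2]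
          rw [hg, hI3, hcj, hej]
          exact sum_l3
      · by_cases hj3 : j ∈ S3
        · have hcj : c j = 2 := by simp [hc, hU, hj3]
          rcases hm23 j (by simp [hj3]) with hg | hg
          · have hej : e j = 1 := by simp [he, hj2, hj3, hg]
            simp only [hφ, if_neg hj1, if_neg hj2, if_pos hj3]
            rw [hg, pow_one, hcj, hej]
            exact sum_l4
          · have hej : e j = -1 := by simp [he, hj2, hj3, hg]
            simp only [hφ, if_neg hj1, if_neg hj2, if_pos hj3]
            rw [hg, hI3, hcj, hej]
            exact sum_l5
        · have hcj : c j = 4 := by simp [hc, hU, hj1, hj2, hj3]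
          have hej : e j = 0 := by simp [he, hj2, hj3]
          simp only [hφ, if_neg hj1, if_neg hj2, if_neg hj3]
          rw [hm0 j hj1 hj2 hj3, pow_zero, hcj, hej]
          simp
  -- evaluation of the local sums, V4 version
  have hfac4 : ∀ j, (∑ x : Fin 4, ((-Complex.I) ^ (G j % 4)) ^ ((x : ℕ)) * φ j x)
      = c j * zeta ^ (-(e j)) := by
    intro j
    by_cases hj1 : j ∈ S1
    · have hj2 : j ∉ S2 := Finset.disjoint_left.mp d12 hj1
      have hj3 : j ∉ S3 := Finset.disjoint_left.mp d13 hj1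
      have hcj : c j = 2 := by simp [hc, hU, hj1]
      have hej : e j = 0 := by simp [he, hj2, hj3]
      simp only [hφ, if_pos hj1]
      rw [hm1 j hj1, neg_sq, Complex.I_sq, hcj, hej]
      simpa using sum_l1
    · by_cases hj2 : j ∈ S2
      · have hcj : c j = 2 := by simp [hc, hU, hj2]
        rcases hm23 j (by simp [hj2]) with hg | hg
        · have hej : e j = -1 := by simp [he, hj2, hg]
          simp only [hφ, if_neg hj1, if_pos hj2]
          rw [hg, pow_one, hcj, hej]
          simpa using sum_l3
        · have hej : e j = 1 := by simp [he, hj2, hg]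
          simp only [hφ, if_neg hj1, if_pos hj2]
          rw [hg, hmI3, hcj, hej]
          exact sum_l2
      · by_cases hj3 : j ∈ S3
        · have hcj : c j = 2 := by simp [hc, hU, hj3]
          rcases hm23 j (by simp [hj3]) with hg | hg
          · have hej : e j = 1 := by simp [he, hj2, hj3, hg]
            simp only [hφ, if_neg hj1, if_neg hj2, if_pos hj3]
            rw [hg, pow_one, hcj, hej]
            exact sum_l5
          · have hej : e j = -1 := by simp [he, hj2, hj3, hg]
            simp only [hφ, if_neg hj1, if_neg hj2, if_pos hj3]
            rw [hg, hmI3, hcj, hej]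
            simpa using sum_l4
        · have hcj : c j = 4 := by simp [hc, hU, hj1, hj2, hj3]
          have hej : e j = 0 := by simp [he, hj2, hj3]
          simp only [hφ, if_neg hj1, if_neg hj2, if_neg hj3]
          rw [hm0 j hj1 hj2 hj3, pow_zero, hcj, hej]
          simp
  -- V1 and V4 in product form
  have hV1 : V1 u v S1 S2 S3 = (C0 * Complex.I) * ∏ j, (c j * zeta ^ (e j)) := by
    rw [V1]
    calc ∑ a : Fin n → Fin 4,
          ((coefPow n (2 * S1.card + S2.card + S3.card) : ℝ) : ℂ) * (1 / 4) *
            Complex.exp (Complex.I * ((Real.pi : ℂ) / 2) * (((1 + dotG u v a : ℝ)) : ℂ)) *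
            ((psi S1 S2 S3 a : ℝ) : ℂ)
        = ∑ a : Fin n → Fin 4, (C0 * Complex.I) *
            ∏ j, ((Complex.I ^ (G j % 4)) ^ ((a j : ℕ)) * φ j (a j)) := by
          refine Finset.sum_congr rfl fun a _ => ?_
          rw [hexp1 a, hpsiC a, hC0, Finset.prod_mul_distrib]
          ring
      _ = (C0 * Complex.I) * ∑ a : Fin n → Fin 4,
            ∏ j, ((Complex.I ^ (G j % 4)) ^ ((a j : ℕ)) * φ j (a j)) := by
          rw [← Finset.mul_sum]
      _ = (C0 * Complex.I) *
            ∏ j, ∑ x : Fin 4, ((Complex.I ^ (G j % 4)) ^ ((x : ℕ)) * φ j x) := by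
          congr 1
          exact (Fintype.prod_sum fun (j : Fin n) (x : Fin 4) => ((Complex.I ^ (G j % 4)) ^ ((x : ℕ)) * φ j x)).symm
      _ = (C0 * Complex.I) * ∏ j, (c j * zeta ^ (e j)) := by
          rw [Finset.prod_congr rfl fun j _ => hfac1 j]
  have hV4 : V4 u v S1 S2 S3 = (C0 * (-Complex.I)) * ∏ j, (c j * zeta ^ (-(e j))) := by
    rw [V4]
    calc ∑ a : Fin n → Fin 4,
          ((coefPow n (2 * S1.card + S2.card + S3.card) : ℝ) : ℂ) * (1 / 4) *
            Complex.exp (-(Complex.I * ((Real.pi : ℂ) / 2) * (((1 + dotG u v a : ℝ)) : ℂ))) *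
            ((psi S1 S2 S3 a : ℝ) : ℂ)
        = ∑ a : Fin n → Fin 4, (C0 * (-Complex.I)) *
            ∏ j, (((-Complex.I) ^ (G j % 4)) ^ ((a j : ℕ)) * φ j (a j)) := by
          refine Finset.sum_congr rfl fun a _ => ?_
          rw [hexp4 a, hpsiC a, hC0, Finset.prod_mul_distrib]
          ring
      _ = (C0 * (-Complex.I)) * ∑ a : Fin n → Fin 4,
            ∏ j, (((-Complex.I) ^ (G j % 4)) ^ ((a j : ℕ)) * φ j (a j)) := by
          rw [← Finset.mul_sum]
      _ = (C0 * (-Complex.I)) *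
            ∏ j, ∑ x : Fin 4, (((-Complex.I) ^ (G j % 4)) ^ ((x : ℕ)) * φ j x) := by
          congr 1
          exact (Fintype.prod_sum fun (j : Fin n) (x : Fin 4) => (((-Complex.I) ^ (G j % 4)) ^ ((x : ℕ)) * φ j x)).symm
      _ = (C0 * (-Complex.I)) * ∏ j, (c j * zeta ^ (-(e j))) := by
          rw [Finset.prod_congr rfl fun j _ => hfac4 j]
  -- cardinal bookkeeping
  set A : ℕ := (S2 ∩ DeltaG u v 1).card with hA
  set B : ℕ := (S2 ∩ DeltaG u v 3).card with hB
  set C : ℕ := (S3 ∩ DeltaG u v 1).card with hCdef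
  set D : ℕ := (S3 ∩ DeltaG u v 3).card with hD
  have hd13' : Disjoint (DeltaG u v 1) (DeltaG u v 3) := by
    rw [Finset.disjoint_left]
    intro j hj hj'
    simp [DeltaG] at hj hj'
    omega
  have hmemD1 : ∀ j, G j % 4 = 1 → j ∈ DeltaG u v 1 := by
    intro j hj; simp [DeltaG, hG] at hj ⊢; exact hj
  have hmemD3 : ∀ j, G j % 4 = 3 → j ∈ DeltaG u v 3 := by
    intro j hj; simp [DeltaG, hG] at hj ⊢; exact hj
  have hS2split : (S2 ∩ DeltaG u v 1) ∪ (S2 ∩ DeltaG u v 3) = S2 := by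
    rw [← Finset.inter_union_distrib_left]
    apply Finset.inter_eq_left.mpr
    intro j hj
    rcases hm23 j (by simp [hj]) with hg | hg
    · exact Finset.mem_union_left _ (hmemD1 j hg)
    · exact Finset.mem_union_right _ (hmemD3 j hg)
  have hS3split : (S3 ∩ DeltaG u v 1) ∪ (S3 ∩ DeltaG u v 3) = S3 := by
    rw [← Finset.inter_union_distrib_left]
    apply Finset.inter_eq_left.mpr
    intro j hj
    rcases hm23 j (by simp [hj]) with hg | hg
    · exact Finset.mem_union_left _ (hmemD1 j hg)
    · exact Finset.mem_union_right _ (hmemD3 j hg)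
  have hAB : A + B = S2.card := by
    rw [hA, hB, ← Finset.card_union_of_disjoint
      (hd13'.mono Finset.inter_subset_right Finset.inter_subset_right), hS2split]
  have hCD : C + D = S3.card := by
    rw [hCdef, hD, ← Finset.card_union_of_disjoint
      (hd13'.mono Finset.inter_subset_right Finset.inter_subset_right), hS3split]
  have hD1split : (S2 ∩ DeltaG u v 1) ∪ (S3 ∩ DeltaG u v 1) = DeltaG u v 1 := by
    rw [← Finset.union_inter_distrib_right, h2]
    exact Finset.inter_eq_right.mpr Finset.subset_union_left
  have hD3split : (S2 ∩ DeltaG u v 3) ∪ (S3 ∩ DeltaG u v 3) = DeltaG u v 3 := by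
    rw [← Finset.union_inter_distrib_right, h2]
    exact Finset.inter_eq_right.mpr Finset.subset_union_right
  have hf1 : (DeltaG u v 1).card = A + C := by
    rw [hA, hCdef, ← Finset.card_union_of_disjoint
      (d23.mono Finset.inter_subset_left Finset.inter_subset_left), hD1split]
  have hf3 : (DeltaG u v 3).card = B + D := by
    rw [hB, hD, ← Finset.card_union_of_disjoint
      (d23.mono Finset.inter_subset_left Finset.inter_subset_left), hD3split]
  have hUcard : U.card = S1.card + S2.card + S3.card := by
    rw [hU, Finset.union_assoc,
      Finset.card_union_of_disjoint (by rw [Finset.disjoint_union_right]; exact ⟨d12, d13⟩),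
      Finset.card_union_of_disjoint d23]
    ring
  have hUn : U.card ≤ n := by
    have := Finset.card_le_univ U
    simpa using this
  -- the sum of the exponents
  have hsumE : ∑ j, e j = (B : ℤ) + C - A - D := by
    have h0 : ∑ j ∈ S2 ∪ S3, e j = ∑ j, e j := by
      apply Finset.sum_subset (Finset.subset_univ _)
      intro j _ hj
      simp only [Finset.mem_union, not_or] at hj
      simp [he, hj.1, hj.2]
    have e2a : S2.filter (fun j => G j % 4 = 1) = S2 ∩ DeltaG u v 1 := by
      ext j
      simp [DeltaG, hG, Finset.mem_inter, Finset.mem_filter]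
    have e2b : S2.filter (fun j => ¬ G j % 4 = 1) = S2 ∩ DeltaG u v 3 := by
      ext j
      simp only [Finset.mem_inter, Finset.mem_filter, DeltaG, Finset.mem_univ, true_and, hG]
      constructor
      · rintro ⟨hj, hne⟩
        exact ⟨hj, (hm23 j (by simp [hj])).resolve_left hne⟩
      · rintro ⟨hj, h3'⟩
        exact ⟨hj, by rw [h3']; norm_num⟩
    have e3a : S3.filter (fun j => G j % 4 = 1) = S3 ∩ DeltaG u v 1 := by
      ext j
      simp [DeltaG, hG, Finset.mem_inter, Finset.mem_filter]
    have e3b : S3.filter (fun j => ¬ G j % 4 = 1) = S3 ∩ DeltaG u v 3 := by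
      ext j
      simp only [Finset.mem_inter, Finset.mem_filter, DeltaG, Finset.mem_univ, true_and, hG]
      constructor
      · rintro ⟨hj, hne⟩
        exact ⟨hj, (hm23 j (by simp [hj])).resolve_left hne⟩
      · rintro ⟨hj, h3'⟩
        exact ⟨hj, by rw [h3']; norm_num⟩
    have hS2sum : ∑ j ∈ S2, e j = (B : ℤ) - A := by
      rw [Finset.sum_congr rfl (fun j hj => by simp [he, hj] :
        ∀ j ∈ S2, e j = if G j % 4 = 1 then (-1 : ℤ) else 1)]
      rw [Finset.sum_ite, Finset.sum_const, Finset.sum_const, e2a, e2b, ← hA, ← hB]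
      simp [nsmul_eq_mul]
      ring
    have hS3sum : ∑ j ∈ S3, e j = (C : ℤ) - D := by
      rw [Finset.sum_congr rfl (fun j hj => by simp [he, hns32 j hj, hj] :
        ∀ j ∈ S3, e j = if G j % 4 = 1 then (1 : ℤ) else -1)]
      rw [Finset.sum_ite, Finset.sum_const, Finset.sum_const, e3a, e3b, ← hCdef, ← hD]
      simp [nsmul_eq_mul]
      ring
    rw [← h0, Finset.sum_union d23, hS2sum, hS3sum]
    ring
  -- the product of the constants
  have hfilterU : Finset.univ.filter (fun j => j ∈ U) = U := by ext j; simp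
  have hprodc : ∏ j, c j = (2 : ℂ) ^ U.card * 4 ^ (n - U.card) := by
    simp only [hc]
    rw [Finset.prod_ite (fun _ => (2:ℂ)) (fun _ => (4:ℂ)), Finset.prod_const, Finset.prod_const,
      hfilterU, Finset.filter_not, hfilterU, Finset.card_sdiff_of_subset (Finset.subset_univ U)]
    simp
  -- β = n₂ + n₃
  have hbeta : betaval u v = S2.card + S3.card := by
    have hcard23 : S2.card + S3.card = ((DeltaG u v 1) ∪ (DeltaG u v 3)).card := by
      rw [← Finset.card_union_of_disjoint d23, h2]
    rw [hcard23]
    have hsplit : (DeltaG u v 1) ∪ (DeltaG u v 3)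
        = Finset.univ.filter (fun j => ((u j : ℕ) + (v j : ℕ)) % 4 = 1
            ∨ ((u j : ℕ) + (v j : ℕ)) % 4 = 3) := by
      ext j; simp [DeltaG, Finset.filter_or]
    rw [hsplit, Finset.card_filter]
    simp only [betaval, lam1, lam2, lam3, lam4, freq, DeltaKS, Finset.card_filter,
      ← Finset.sum_add_distrib]
    refine Finset.sum_congr rfl fun j _ => ?_
    generalize u j = p
    generalize v j = q
    fin_cases p <;> fin_cases q <;> decide
  -- the coefficient identity (real part)
  set β : ℕ := betaval u v with hβ
  set r : ℝ := (2 : ℝ) ^ ((β : ℝ) / 2 + 1) with hr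
  have hrpos : 0 < r := Real.rpow_pos_of_pos two_pos _
  have hrne : ((r : ℝ) : ℂ) ≠ 0 := by
    simpa using ne_of_gt hrpos
  have hcoefR : (coefPow n (2 * S1.card + S2.card + S3.card) : ℝ) * (1 / 4) *
      ((2 : ℝ) ^ U.card * 4 ^ (n - U.card)) = r⁻¹ := by
    have hUr : ((U.card : ℕ) : ℝ) = (S1.card : ℝ) + S2.card + S3.card := by
      rw [hUcard]; push_cast; ring
    have hbr : ((β : ℕ) : ℝ) = (S2.card : ℝ) + S3.card := by
      rw [hbeta]; push_cast; ring
    have hsub : (((n - U.card : ℕ)) : ℝ) = (n : ℝ) - ((S1.card : ℝ) + S2.card + S3.card) := by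
      rw [Nat.cast_sub hUn, hUr]
    have h4 : ((4 : ℝ)) ^ (n - U.card) = (2 : ℝ) ^ (2 * (n - U.card)) := by
      rw [pow_mul]; norm_num
    rw [coefPow, h4, ← Real.rpow_natCast (2:ℝ) U.card, ← Real.rpow_natCast (2:ℝ) (2*(n - U.card)),
      ← Real.rpow_add two_pos]
    rw [show (1/4:ℝ) = (2:ℝ)^((-2):ℝ) by
      rw [show ((-2:ℝ)) = -((2:ℕ):ℝ) by norm_num,
        Real.rpow_neg (by norm_num : (0:ℝ) ≤ 2), Real.rpow_natCast]
      norm_num]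
    rw [← Real.rpow_add two_pos, ← Real.rpow_add two_pos, hr, ← Real.rpow_neg (le_of_lt two_pos)]
    congr 1
    push_cast [Nat.cast_sub hUn]
    rw [hUr, hbr]
    ring
  -- final assembly
  have hz4 : zeta ^ (4:ℤ) = -1 := by
    rw [show (4:ℤ) = ((4:ℕ):ℤ) from rfl, zpow_natCast,
      show zeta ^ (4:ℕ) = (zeta ^ 2) ^ 2 by ring, zeta_sq, Complex.I_sq]
  have hz2 : zeta ^ (2:ℤ) = Complex.I := by
    rw [show (2:ℤ) = ((2:ℕ):ℤ) from rfl, zpow_natCast, zeta_sq]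
  have hzm2 : zeta ^ (-2:ℤ) = -Complex.I := by
    rw [show (-2:ℤ) = -(2:ℤ) from rfl, zpow_neg, hz2, Complex.inv_I]
  have hz8 : zeta ^ (8:ℤ) = 1 := by
    rw [show (8:ℤ) = ((8:ℕ):ℤ) from rfl, zpow_natCast, zeta_pow8]
  have hneg1C : zeta ^ (4 * (C:ℤ)) = (-1:ℂ) ^ C := by
    rw [zpow_mul, hz4, zpow_natCast]
  have hICn3 : zeta ^ (2 * (S3.card:ℤ)) = Complex.I ^ S3.card := by
    rw [zpow_mul, hz2, zpow_natCast]
  have hneg1n3 : zeta ^ (4 * (S3.card:ℤ)) = (-1:ℂ) ^ S3.card := by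
    rw [zpow_mul, hz4, zpow_natCast]
  have hzshift : ∀ k m : ℤ, k = m + 8 * (C:ℤ) → zeta ^ k = zeta ^ m := by
    intro k m hkm
    rw [hkm, zpow_add₀ zeta_ne, zpow_mul, hz8, one_zpow, mul_one]
  set K : ℤ := 2 + ((DeltaG u v 3).card : ℤ) - ((DeltaG u v 1).card : ℤ) with hK
  set P : ℤ := 4 * (C:ℤ) - 2 * (S3.card:ℤ) + K with hP
  set Q : ℤ := 4 * (C:ℤ) + 2 * (S3.card:ℤ) - K with hQ
  have hCoefC : C0 * ((2:ℂ) ^ U.card * 4 ^ (n - U.card)) = ((r⁻¹ : ℝ) : ℂ) := by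
    rw [hC0, ← hcoefR]
    push_cast
    ring
  have hL : V1 u v S1 S2 S3 + V4 u v S1 S2 S3 = ((r⁻¹ : ℝ) : ℂ) * (zeta ^ P + zeta ^ Q) := by
    rw [hV1, hV4, Finset.prod_mul_distrib, Finset.prod_mul_distrib,
      prod_zpow_sum _ _ zeta_ne, prod_zpow_sum _ _ zeta_ne, Finset.sum_neg_distrib,
      hsumE, hprodc]
    have h1' : Complex.I * zeta ^ ((B:ℤ) + C - A - D) = zeta ^ P := by
      rw [← hz2, ← zpow_add₀ zeta_ne]
      congr 1
      omega
    have h2' : (-Complex.I) * zeta ^ (-((B:ℤ) + C - A - D)) = zeta ^ Q := by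
      rw [← hzm2, ← zpow_add₀ zeta_ne]
      exact (hzshift _ _ (by omega)).symm
    rw [← h1', ← h2', ← hCoefC]
    ring
  have hP1 : zeta ^ P = zeta ^ (4*(C:ℤ)) * (zeta ^ (2*(S3.card:ℤ)))⁻¹ * zeta ^ K := by
    rw [show P = 4*(C:ℤ) + -(2*(S3.card:ℤ)) + K by omega,
      zpow_add₀ zeta_ne, zpow_add₀ zeta_ne, zpow_neg]
  have hQ1 : zeta ^ Q = zeta ^ (4*(C:ℤ)) * (zeta ^ (2*(S3.card:ℤ)))⁻¹ *
      (zeta ^ (4*(S3.card:ℤ)) * zeta ^ (-K)) := by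
    rw [show Q = 4*(C:ℤ) + -(2*(S3.card:ℤ)) + (4*(S3.card:ℤ) + -K) by omega,
      zpow_add₀ zeta_ne, zpow_add₀ zeta_ne, zpow_add₀ zeta_ne, zpow_neg, zpow_neg]
  rw [hL, exp_I_pi4_int K,
    show -(Complex.I * ((Real.pi:ℂ)/4) * ((K:ℤ):ℂ))
      = Complex.I * ((Real.pi:ℂ)/4) * (((-K:ℤ)):ℂ) by push_cast; ring,
    exp_I_pi4_int, ← hneg1C, ← hICn3, ← hneg1n3, hP1, hQ1]
  have hY : (zeta ^ (2*(S3.card:ℤ))) ≠ 0 := zpow_ne_zero _ zeta_ne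
  push_cast
  rw [div_eq_mul_inv, mul_inv]
  ring
end
end

section
/- (Lemma A.5) (i) For any pairwise disjoint subsets S_1, S_2, S_3 of {1,…,n}, (−1)^{n(h,1)} = (−1)^{n(g,1) + μ_2}, i.e., n(h,1) − n(g,1) ≡ μ_2 (mod 2). (ii) If condition (A.15) holds or condition (A.16) holds, then n_3 = μ_1 + μ_2. -/
/-!
Everything depends only on the parities of `u j` and `v j`. Since `g j - h j = 2 * v j`, we have
`h j ≡ g j` (mod 4) when `v j` is even and `h j ≡ g j + 2` when `v j` is odd; hence
`Δ₁^h = Δ₁^g ∆ Δ⁽²⁾`, and (i) follows from `#(A ∆ B) ≡ #A + #B` (mod 2). For (ii), either condition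
puts `S₃` inside the set where `g j` (equivalently `h j`) is odd, i.e. where exactly one of `u j`,
`v j` is odd, and that set is the disjoint union `Δ⁽¹⁾ ∪ Δ⁽²⁾`.
-/

open Real Finset

noncomputable section

theorem Finset.card_symmDiff_add_two_mul_card_inter {α : Type*} [DecidableEq α] (s t : Finset α) :
    #(symmDiff s t) + 2 * #(s ∩ t) = #s + #t := by
  rw [symmDiff_eq_sup_sdiff_inf, sup_eq_union, inf_eq_inter,
    card_sdiff_of_subset inter_subset_union, ← card_union_add_card_inter s t]
  have := card_le_card (inter_subset_union (s := s) (t := t))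
  omega

theorem Finset.neg_one_pow_card_symmDiff {α : Type*} [DecidableEq α] (s t : Finset α) :
    (-1 : ℤ) ^ #(symmDiff s t) = (-1) ^ (#s + #t) := by
  rw [← card_symmDiff_add_two_mul_card_inter, pow_add, pow_mul]
  simp

theorem Finset.card_eq_card_inter_add_card_inter {α : Type*} [DecidableEq α] {S A B : Finset α}
    (hAB : Disjoint A B) (hS : S ⊆ A ∪ B) : #S = #(S ∩ A) + #(S ∩ B) := by
  rw [← card_union_of_disjoint (hAB.mono inter_subset_right inter_subset_right),
    ← inter_union_distrib_left, inter_eq_left.mpr hS]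

section Parity

variable {n : ℕ} (u v : Fin n → Fin 4)

theorem mem_DeltaOne_iff (j : Fin n) :
    j ∈ DeltaOne u v ↔ Odd (u j : ℕ) ∧ Even (v j : ℕ) := by
  simp only [DeltaOne, DeltaKS, mem_union, mem_filter, mem_univ, true_and]
  generalize u j = a, v j = b
  decide +revert

theorem mem_DeltaTwo_iff (j : Fin n) :
    j ∈ DeltaTwo u v ↔ Even (u j : ℕ) ∧ Odd (v j : ℕ) := by
  simp only [DeltaTwo, DeltaKS, mem_union, mem_filter, mem_univ, true_and]
  generalize u j = a, v j = b
  decide +revert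

theorem disjoint_DeltaOne_DeltaTwo : Disjoint (DeltaOne u v) (DeltaTwo u v) := by
  rw [disjoint_left]
  intro j h1 h2
  rw [mem_DeltaOne_iff] at h1
  rw [mem_DeltaTwo_iff] at h2
  exact Nat.not_even_iff_odd.mpr h1.1 h2.1

theorem DeltaG_one_union_DeltaG_three :
    DeltaG u v 1 ∪ DeltaG u v 3 = DeltaOne u v ∪ DeltaTwo u v := by
  ext j
  simp only [DeltaG, mem_union, mem_filter, mem_univ, true_and, mem_DeltaOne_iff,
    mem_DeltaTwo_iff]
  generalize u j = a, v j = b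
  decide +revert

theorem DeltaH_one_union_DeltaH_three :
    DeltaH u v 1 ∪ DeltaH u v 3 = DeltaOne u v ∪ DeltaTwo u v := by
  ext j
  simp only [DeltaH, mem_union, mem_filter, mem_univ, true_and, mem_DeltaOne_iff,
    mem_DeltaTwo_iff]
  generalize u j = a, v j = b
  decide +revert

theorem DeltaH_one_eq_symmDiff : DeltaH u v 1 = symmDiff (DeltaG u v 1) (DeltaTwo u v) := by
  ext j
  simp only [DeltaH, DeltaG, mem_symmDiff, mem_filter, mem_univ, true_and, mem_DeltaTwo_iff]
  generalize u j = a, v j = b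
  decide +revert

end Parity

theorem lemmaA5_general (n : ℕ) (u v : Fin n → Fin 4)
    (S1 S2 S3 : Finset (Fin n)) :
    ((-1 : ℤ) ^ (S3 ∩ DeltaH u v 1).card =
      (-1 : ℤ) ^ ((S3 ∩ DeltaG u v 1).card + (S3 ∩ DeltaTwo u v).card)) ∧
    (CondA15 u v S1 S2 S3 ∨ CondA16 u v S1 S2 S3 →
      S3.card = (S3 ∩ DeltaOne u v).card + (S3 ∩ DeltaTwo u v).card) := by
  refine ⟨?_, fun hcond => ?_⟩
  · rw [DeltaH_one_eq_symmDiff, ← neg_one_pow_card_symmDiff]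
    exact congrArg (fun T => (-1 : ℤ) ^ #T) (inf_symmDiff_distrib_left _ _ _)
  · have hS3 : S3 ⊆ DeltaOne u v ∪ DeltaTwo u v := by
      rcases hcond with ⟨-, h, -⟩ | ⟨-, h, -⟩
      · rw [← DeltaG_one_union_DeltaG_three, ← h]; exact subset_union_right
      · rw [← DeltaH_one_union_DeltaH_three, ← h]; exact subset_union_right
    exact card_eq_card_inter_add_card_inter (disjoint_DeltaOne_DeltaTwo u v) hS3

/-- Lemma A.5: (i) (−1)^{n(h,1)} = (−1)^{n(g,1)+μ₂};
(ii) if (A.15) or (A.16) holds then n₃ = μ₁ + μ₂. -/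
theorem lemmaA5 (n : ℕ) (hn : 1 ≤ n) (u v : Fin n → Fin 4)
    (S1 S2 S3 : Finset (Fin n)) (hd : PairwiseDisj S1 S2 S3) :
    ((-1 : ℤ) ^ (S3 ∩ DeltaH u v 1).card =
      (-1 : ℤ) ^ ((S3 ∩ DeltaG u v 1).card + (S3 ∩ DeltaTwo u v).card)) ∧
    (CondA15 u v S1 S2 S3 ∨ CondA16 u v S1 S2 S3 →
      S3.card = (S3 ∩ DeltaOne u v).card + (S3 ∩ DeltaTwo u v).card) :=
  lemmaA5_general n u v S1 S2 S3
end
end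

section
/- (Lemma A.6) (i) If λ_5 + λ_6 = 0, then for any pairwise disjoint subsets S_1, S_2, S_3 of {1,…,n} the conditions (A.15) and (A.16) are equivalent, and each is equivalent to condition (A.23). (ii) If λ_5 + λ_6 > 0, then no triple (S_1,S_2,S_3) of pairwise disjoint subsets of {1,…,n} satisfies both (A.15) and (A.16). -/
open Real Finset

noncomputable section

/-- Lemma A.6: (i) if λ₅ + λ₆ = 0 then (A.15), (A.16) and (A.23) are equivalent;
(ii) if λ₅ + λ₆ > 0 then (A.15) and (A.16) cannot hold simultaneously. -/
theorem lemmaA6 (n : ℕ) (hn : 1 ≤ n) (u v : Fin n → Fin 4) :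
    (lam5 u v + lam6 u v = 0 →
      ∀ S1 S2 S3 : Finset (Fin n), PairwiseDisj S1 S2 S3 →
        (CondA15 u v S1 S2 S3 ↔ CondA16 u v S1 S2 S3) ∧
        (CondA15 u v S1 S2 S3 ↔ CondA23 u v S1 S2 S3)) ∧
    (0 < lam5 u v + lam6 u v →
      ∀ S1 S2 S3 : Finset (Fin n), PairwiseDisj S1 S2 S3 →
        ¬ (CondA15 u v S1 S2 S3 ∧ CondA16 u v S1 S2 S3)) := by

  constructor
  · intro h0 S1 S2 S3 _
    have hK : ∀ j : Fin n, ¬((u j : ℕ) % 2 = 1 ∧ (v j : ℕ) % 2 = 1) := by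
      intro j hj
      have h5 : lam5 u v = 0 := by omega
      have h6 : lam6 u v = 0 := by omega
      simp only [lam5, lam6, Nat.add_eq_zero, freq, Finset.card_eq_zero] at h5 h6
      have e11 := Finset.eq_empty_iff_forall_notMem.mp h5.1 j
      have e33 := Finset.eq_empty_iff_forall_notMem.mp h5.2 j
      have e13 := Finset.eq_empty_iff_forall_notMem.mp h6.1 j
      have e31 := Finset.eq_empty_iff_forall_notMem.mp h6.2 j
      simp only [DeltaKS, Finset.mem_filter, Finset.mem_univ, true_and, not_and,
        Fin.ext_iff, Fin.val_one] at e11 e33 e13 e31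
      have hu := (u j).isLt
      have hv := (v j).isLt
      omega
    have hG2 : DeltaG u v 2 = DeltaKS u v 0 2 ∪ DeltaKS u v 2 0 := by
      ext j
      simp only [DeltaG, DeltaKS, Finset.mem_union, Finset.mem_filter, Finset.mem_univ,
        true_and, Fin.ext_iff]
      have := hK j; have hu := (u j).isLt; have hv := (v j).isLt; omega
    have hG13 : DeltaG u v 1 ∪ DeltaG u v 3 = DeltaOne u v ∪ DeltaTwo u v := by
      ext j
      simp only [DeltaG, DeltaOne, DeltaTwo, DeltaKS, Finset.mem_union, Finset.mem_filter,
        Finset.mem_univ, true_and, Fin.ext_iff]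
      have := hK j; have hu := (u j).isLt; have hv := (v j).isLt; omega
    have hG0 : DeltaG u v 0 = DeltaKS u v 0 0 ∪ DeltaKS u v 2 2 := by
      ext j
      simp only [DeltaG, DeltaKS, Finset.mem_union, Finset.mem_filter, Finset.mem_univ,
        true_and, Fin.ext_iff]
      have := hK j; have hu := (u j).isLt; have hv := (v j).isLt; omega
    have hH2 : DeltaH u v 2 = DeltaKS u v 0 2 ∪ DeltaKS u v 2 0 := by
      ext j
      simp only [DeltaH, DeltaKS, Finset.mem_union, Finset.mem_filter, Finset.mem_univ,
        true_and, Fin.ext_iff]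
      have := hK j; have hu := (u j).isLt; have hv := (v j).isLt; omega
    have hH13 : DeltaH u v 1 ∪ DeltaH u v 3 = DeltaOne u v ∪ DeltaTwo u v := by
      ext j
      simp only [DeltaH, DeltaOne, DeltaTwo, DeltaKS, Finset.mem_union, Finset.mem_filter,
        Finset.mem_univ, true_and, Fin.ext_iff]
      have := hK j; have hu := (u j).isLt; have hv := (v j).isLt; omega
    have hH0 : DeltaH u v 0 = DeltaKS u v 0 0 ∪ DeltaKS u v 2 2 := by
      ext j
      simp only [DeltaH, DeltaKS, Finset.mem_union, Finset.mem_filter, Finset.mem_univ,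
        true_and, Fin.ext_iff]
      have := hK j; have hu := (u j).isLt; have hv := (v j).isLt; omega
    unfold CondA15 CondA16 CondA23
    rw [hG2, hG13, hG0, hH2, hH13, hH0]
    exact ⟨Iff.rfl, Iff.rfl⟩
  · rintro hpos S1 S2 S3 _ ⟨h15, h16⟩
    have hex : ∃ j : Fin n, (u j : ℕ) % 2 = 1 ∧ (v j : ℕ) % 2 = 1 := by
      have hd : 0 < freq u v 1 1 ∨ 0 < freq u v 3 3 ∨ 0 < freq u v 1 3 ∨ 0 < freq u v 3 1 := by
        simp only [lam5, lam6] at hpos; omega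
      have get : ∀ k s : Fin 4, 0 < freq u v k s →
          ∃ j : Fin n, u j = k ∧ v j = s := by
        intro k s h
        obtain ⟨j, hj⟩ := Finset.card_pos.mp h
        simp only [DeltaKS, Finset.mem_filter, Finset.mem_univ, true_and] at hj
        exact ⟨j, hj⟩
      rcases hd with h | h | h | h <;>
        obtain ⟨j, hj1, hj2⟩ := get _ _ h <;>
        exact ⟨j, by rw [hj1, hj2]; decide⟩
    obtain ⟨j, hj1, hj2⟩ := hex
    have e1 := h15.1
    have e2 := h16.1
    rw [e1] at e2
    have hm := Finset.ext_iff.mp e2 j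
    simp only [DeltaG, DeltaH, Finset.mem_filter, Finset.mem_univ, true_and] at hm
    have hu := (u j).isLt
    have hv := (v j).isLt
    omega
end
end
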